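/- Combining Theorem 2 with Theorem 1: under Assumption A, L-Lipschitz gradient of L, the optimal stationarity condition of ℓ, and either learning-rate schedule (i) ζ ≤ ε^{(r)} ≤ c̲(2−ζ)/(L c̄) or (ii) ε^{(r)} → 0 with Σ ε^{(r)} = ∞, any limit point θ of the iterate sequence {θ^{(r)}} at which rank(∂û_X(θ)/∂θ) = N D_u is a global minimum of L. -/

import Mathlib

/-!
By the descent lemma, Assumption A and either step-size schedule make every late step decrease
`L` by at least `α εᵣ ‖∇L(θᵣ)‖²`; since `L ≥ 0` this gives `∑ εᵣ ‖∇L(θᵣ)‖² < ∞`, while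
`∑ εᵣ = ∞`. The iterates move by at most `√c̄ εᵣ ‖∇L(θᵣ)‖` per step and `∇L` is Lipschitz, so
`‖∇L(θᵣ)‖` cannot keep returning to a level `c > 0`: the way down to `c/2` would cost more of
the convergent series than the tail holds. Hence `∇L(θᵣ) → 0` and every limit point is
stationary. There `0 = ∇L = (1/N) Jᵀ (∇ℓᵢ)ᵢ` with `J` the stacked Jacobian; full rank makes `J`
surjective, so pairing with a preimage of `(∇ℓᵢ)ᵢ` gives `∑ ‖∇ℓᵢ‖² = 0`, and optimal
stationarity makes every summand of `L` globally minimal.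
-/

open Filter InnerProductSpace

section Smooth

variable {P : Type*} [NormedAddCommGroup P] [InnerProductSpace ℝ P] [CompleteSpace P]
  {f : P → ℝ} {Lc : ℝ}

theorem hasDerivAt_comp_add_smul (hf : Differentiable ℝ f) (x d : P) (t : ℝ) :
    HasDerivAt (fun s : ℝ => f (x + s • d)) (inner ℝ (gradient f (x + t • d)) d) t := by
  have hline : HasDerivAt (fun s : ℝ => x + s • d) d t := by
    simpa using ((hasDerivAt_id t).smul_const d).const_add x
  have h := (hf _).hasGradientAt.hasFDerivAt.comp_hasDerivAt t hline
  rw [toDual_apply_apply] at h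
  exact h

theorem descent_lemma (hf : Differentiable ℝ f)
    (hlip : ∀ x y, ‖gradient f x - gradient f y‖ ≤ Lc * ‖x - y‖) (x y : P) :
    f y ≤ f x + inner ℝ (gradient f x) (y - x) + Lc / 2 * ‖y - x‖ ^ 2 := by
  set d := y - x
  let g : ℝ → ℝ := fun t =>
    f (x + t • d) - t * inner ℝ (gradient f x) d - Lc / 2 * ‖d‖ ^ 2 * t ^ 2
  have hg : ∀ t, HasDerivAt g (inner ℝ (gradient f (x + t • d)) d - inner ℝ (gradient f x) d
      - Lc * ‖d‖ ^ 2 * t) t := by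
    intro t
    refine (((hasDerivAt_comp_add_smul hf x d t).sub
      ((hasDerivAt_id t).mul_const (inner ℝ (gradient f x) d))).sub
      (((hasDerivAt_id t).pow 2).const_mul (Lc / 2 * ‖d‖ ^ 2))).congr_deriv ?_
    simp only [id_eq, one_mul, mul_one, Nat.cast_ofNat, Nat.add_one_sub_one, pow_one]; ring
  have hg' : ∀ t ∈ interior (Set.Icc (0 : ℝ) 1), inner ℝ (gradient f (x + t • d)) d
      - inner ℝ (gradient f x) d - Lc * ‖d‖ ^ 2 * t ≤ 0 := by
    intro t ht
    rw [interior_Icc] at ht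
    suffices inner ℝ (gradient f (x + t • d)) d - inner ℝ (gradient f x) d
        ≤ Lc * ‖d‖ ^ 2 * t by linarith
    calc inner ℝ (gradient f (x + t • d)) d - inner ℝ (gradient f x) d
          = inner ℝ (gradient f (x + t • d) - gradient f x) d := (inner_sub_left ..).symm
      _ ≤ ‖gradient f (x + t • d) - gradient f x‖ * ‖d‖ := real_inner_le_norm _ _
      _ ≤ Lc * ‖(x + t • d) - x‖ * ‖d‖ := by gcongr; exact hlip _ _
      _ = Lc * ‖d‖ ^ 2 * t := by
          rw [add_sub_cancel_left, norm_smul, Real.norm_of_nonneg ht.1.le]; ring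
  have hanti := antitoneOn_of_hasDerivWithinAt_nonpos (convex_Icc 0 1)
    (fun t _ => (hg t).continuousAt.continuousWithinAt) (fun t _ => (hg t).hasDerivWithinAt) hg'
  have h01 := hanti (Set.left_mem_Icc.2 zero_le_one) (Set.right_mem_Icc.2 zero_le_one) zero_le_one
  simp only [g, d, zero_smul, add_zero, one_smul, add_sub_cancel] at h01
  linarith

theorem descent_step_le (hf : Differentiable ℝ f)
    (hlip : ∀ x y, ‖gradient f x - gradient f y‖ ≤ Lc * ‖x - y‖) (hLc : 0 ≤ Lc)
    {x g : P} {t cl cu α : ℝ}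
    (hA1 : cl * ‖gradient f x‖ ^ 2 ≤ inner ℝ (gradient f x) g)
    (hA2 : ‖g‖ ^ 2 ≤ cu * ‖gradient f x‖ ^ 2) (ht : 0 ≤ t)
    (hstep : Lc * cu / 2 * t ≤ cl - α) :
    f (x - t • g) ≤ f x - α * (t * ‖gradient f x‖ ^ 2) := by
  have hdesc := descent_lemma hf hlip x (x - t • g)
  have hinner : inner ℝ (gradient f x) (x - t • g - x) = -(t * inner ℝ (gradient f x) g) := by
    rw [sub_sub_cancel_left, inner_neg_right, real_inner_smul_right]
  have hnorm : ‖x - t • g - x‖ ^ 2 = t ^ 2 * ‖g‖ ^ 2 := by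
    rw [sub_sub_cancel_left, norm_neg, norm_smul, Real.norm_of_nonneg ht, mul_pow]
  rw [hinner, hnorm] at hdesc
  have h1 := mul_le_mul_of_nonneg_left hA1 ht
  have h2 := mul_le_mul_of_nonneg_left hA2 (by positivity : 0 ≤ Lc / 2 * t ^ 2)
  have h3 := mul_le_mul_of_nonneg_right hstep (by positivity : 0 ≤ t * ‖gradient f x‖ ^ 2)
  nlinarith

end Smooth

section Sequences

variable {ε a : ℕ → ℝ}

theorem summable_of_le_sub_succ {u b : ℕ → ℝ} (hu : ∀ n, 0 ≤ u n) (hb : ∀ n, 0 ≤ b n)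
    (h : ∀ n, u (n + 1) ≤ u n - b n) : Summable b := by
  refine summable_of_sum_range_le (c := u 0) hb fun n => ?_
  calc ∑ i ∈ Finset.range n, b i ≤ ∑ i ∈ Finset.range n, (u i - u (i + 1)) :=
        Finset.sum_le_sum fun i _ => by linarith [h i]
    _ = u 0 - u n := Finset.sum_range_sub' u n
    _ ≤ u 0 := by linarith [hu n]

theorem frequently_lt_of_summable_mul_sq (hε : ∀ n, 0 ≤ ε n) (hdiv : ¬Summable ε)
    (hsum : Summable fun n => ε n * a n ^ 2) {c : ℝ} (hc : 0 < c) :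
    ∃ᶠ n in atTop, a n < c := by
  contrapose! hdiv
  refine (hsum.div_const (c ^ 2)).of_norm_bounded_eventually_nat ?_
  filter_upwards [hdiv] with n hn
  rw [Real.norm_of_nonneg (hε n), le_div_iff₀ (by positivity)]
  exact mul_le_mul_of_nonneg_left (pow_le_pow_left₀ hc.le hn 2) (hε n)

theorem eventually_sum_Ico_le {b : ℕ → ℝ} (hb0 : ∀ n, 0 ≤ b n) (hb : Summable b) {η : ℝ}
    (hη : 0 < η) : ∀ᶠ m in atTop, ∀ n, ∑ i ∈ Finset.Ico m n, b i ≤ η := by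
  filter_upwards [(tendsto_sum_nat_add b).eventually (ge_mem_nhds hη)] with m hm n
  rw [Finset.sum_Ico_eq_sum_range]
  refine le_trans ?_ hm
  simp_rw [add_comm m]
  exact ((summable_nat_add_iff m).2 hb).sum_le_tsum _ fun k _ => hb0 _

theorem sum_mul_le_sum_mul_sq_div (hε : ∀ n, 0 ≤ ε n) {s : Finset ℕ} {c : ℝ} (hc : 0 < c)
    (ha : ∀ i ∈ s, c ≤ a i) :
    ∑ i ∈ s, ε i * a i ≤ (∑ i ∈ s, ε i * a i ^ 2) / c := by
  rw [Finset.sum_div]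
  refine Finset.sum_le_sum fun i hi => ?_
  rw [le_div_iff₀ hc]
  have := mul_le_mul_of_nonneg_left (ha i hi) (mul_nonneg (hε i) (hc.trans_le (ha i hi)).le)
  nlinarith

theorem tendsto_zero_of_summable_mul_sq {K : ℝ} (hK : 0 ≤ K) (hε : ∀ n, 0 ≤ ε n)
    (ha : ∀ n, 0 ≤ a n) (hdiv : ¬Summable ε) (hsum : Summable fun n => ε n * a n ^ 2)
    (hdrift : ∀ m n, m ≤ n → a m - a n ≤ K * ∑ i ∈ Finset.Ico m n, ε i * a i) :
    Tendsto a atTop (nhds 0) := by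
  refine tendsto_order.2 ⟨fun c hc => Eventually.of_forall fun n => hc.trans_le (ha n),
    fun c hc => ?_⟩
  by_contra hfreq
  simp only [not_eventually, not_lt] at hfreq
  set η := c ^ 2 / (4 * (K + 1))
  have hη : 0 < η := by positivity
  obtain ⟨m, hcm, htail⟩ := (hfreq.and_eventually
    (eventually_sum_Ico_le (fun n => mul_nonneg (hε n) (sq_nonneg _)) hsum hη)).exists
  have hdrop : ∃ n, m ≤ n ∧ a n < c / 2 :=
    frequently_atTop.1 (frequently_lt_of_summable_mul_sq hε hdiv hsum (half_pos hc)) m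
  classical
  set n := Nat.find hdrop
  obtain ⟨hmn, hn⟩ : m ≤ n ∧ a n < c / 2 := Nat.find_spec hdrop
  have hbig : ∀ i ∈ Finset.Ico m n, c / 2 ≤ a i := fun i hi => by
    have := Nat.find_min hdrop (Finset.mem_Ico.1 hi).2
    simp only [not_and, not_lt] at this
    exact this (Finset.mem_Ico.1 hi).1
  refine lt_irrefl (c / 2) ?_
  calc
    c / 2 < a m - a n := by linarith
    _ ≤ K * ∑ i ∈ Finset.Ico m n, ε i * a i := hdrift m n hmn
    _ ≤ K * ((∑ i ∈ Finset.Ico m n, ε i * a i ^ 2) / (c / 2)) :=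
        mul_le_mul_of_nonneg_left (sum_mul_le_sum_mul_sq_div hε (half_pos hc) hbig) hK
    _ ≤ K * (η / (c / 2)) := by gcongr; exact htail n
    _ ≤ c / 2 := by
        have hKη : K * η ≤ c ^ 2 / 4 := by
          rw [mul_div_assoc', div_le_div_iff₀ (by positivity) (by norm_num)]
          nlinarith [sq_nonneg c]
        rw [mul_div_assoc', div_le_iff₀ (half_pos hc)]
        nlinarith

end Sequences

section Iteration

variable {P : Type*} [NormedAddCommGroup P] [InnerProductSpace ℝ P] [CompleteSpace P]
  {f : P → ℝ} {Lc cl cu α : ℝ} {θ g : ℕ → P} {ε : ℕ → ℝ}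

theorem norm_gradient_sub_le_sum
    (hlip : ∀ x y, ‖gradient f x - gradient f y‖ ≤ Lc * ‖x - y‖) (hLc : 0 ≤ Lc) (hcu : 0 ≤ cu)
    (hA2 : ∀ r, ‖g r‖ ^ 2 ≤ cu * ‖gradient f (θ r)‖ ^ 2)
    (hupd : ∀ r, θ (r + 1) = θ r - ε r • g r) (hε : ∀ r, 0 ≤ ε r) {m n : ℕ} (hmn : m ≤ n) :
    ‖gradient f (θ m)‖ - ‖gradient f (θ n)‖
      ≤ Lc * √cu * ∑ i ∈ Finset.Ico m n, ε i * ‖gradient f (θ i)‖ := by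
  have hstep : ∀ i, dist (θ i) (θ (i + 1)) ≤ √cu * (ε i * ‖gradient f (θ i)‖) := fun i => by
    have hg : ‖g i‖ ≤ √cu * ‖gradient f (θ i)‖ := by
      calc ‖g i‖ ≤ √(cu * ‖gradient f (θ i)‖ ^ 2) := Real.le_sqrt_of_sq_le (hA2 i)
        _ = √cu * ‖gradient f (θ i)‖ := by rw [Real.sqrt_mul hcu, Real.sqrt_sq (norm_nonneg _)]
    rw [dist_eq_norm, hupd, sub_sub_cancel, norm_smul, Real.norm_of_nonneg (hε i)]
    linarith [mul_le_mul_of_nonneg_left hg (hε i)]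
  calc ‖gradient f (θ m)‖ - ‖gradient f (θ n)‖ ≤ ‖gradient f (θ m) - gradient f (θ n)‖ :=
        norm_sub_norm_le _ _
    _ ≤ Lc * ‖θ m - θ n‖ := hlip _ _
    _ ≤ Lc * ∑ i ∈ Finset.Ico m n, √cu * (ε i * ‖gradient f (θ i)‖) := by
        gcongr
        rw [← dist_eq_norm]
        exact (dist_le_Ico_sum_dist θ hmn).trans (Finset.sum_le_sum fun i _ => hstep i)
    _ = Lc * √cu * ∑ i ∈ Finset.Ico m n, ε i * ‖gradient f (θ i)‖ := by
        rw [← Finset.mul_sum, mul_assoc]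

theorem summable_step_mul_norm_gradient_sq (hf : Differentiable ℝ f) (hf0 : ∀ x, 0 ≤ f x)
    (hlip : ∀ x y, ‖gradient f x - gradient f y‖ ≤ Lc * ‖x - y‖) (hLc : 0 ≤ Lc)
    (hA1 : ∀ r, cl * ‖gradient f (θ r)‖ ^ 2 ≤ inner ℝ (gradient f (θ r)) (g r))
    (hA2 : ∀ r, ‖g r‖ ^ 2 ≤ cu * ‖gradient f (θ r)‖ ^ 2)
    (hupd : ∀ r, θ (r + 1) = θ r - ε r • g r) (hε : ∀ r, 0 ≤ ε r)
    (hα : 0 < α) (hstep : ∀ᶠ r in atTop, Lc * cu / 2 * ε r ≤ cl - α) :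
    Summable fun r => ε r * ‖gradient f (θ r)‖ ^ 2 := by
  obtain ⟨R, hR⟩ := eventually_atTop.1 hstep
  rw [← summable_nat_add_iff R, ← summable_mul_left_iff hα.ne']
  refine summable_of_le_sub_succ (u := fun n => f (θ (n + R))) (fun n => hf0 _)
    (fun n => mul_nonneg hα.le (mul_nonneg (hε _) (sq_nonneg _))) fun n => ?_
  rw [Nat.add_right_comm, hupd]
  exact descent_step_le hf hlip hLc (hA1 _) (hA2 _) (hε _) (hR _ (Nat.le_add_left R n))

theorem tendsto_norm_gradient_zero (hf : Differentiable ℝ f) (hf0 : ∀ x, 0 ≤ f x)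
    (hlip : ∀ x y, ‖gradient f x - gradient f y‖ ≤ Lc * ‖x - y‖) (hLc : 0 ≤ Lc) (hcu : 0 ≤ cu)
    (hA1 : ∀ r, cl * ‖gradient f (θ r)‖ ^ 2 ≤ inner ℝ (gradient f (θ r)) (g r))
    (hA2 : ∀ r, ‖g r‖ ^ 2 ≤ cu * ‖gradient f (θ r)‖ ^ 2)
    (hupd : ∀ r, θ (r + 1) = θ r - ε r • g r) (hε : ∀ r, 0 ≤ ε r)
    (hα : 0 < α) (hstep : ∀ᶠ r in atTop, Lc * cu / 2 * ε r ≤ cl - α) (hdiv : ¬Summable ε) :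
    Tendsto (fun r => ‖gradient f (θ r)‖) atTop (nhds 0) :=
  tendsto_zero_of_summable_mul_sq (by positivity) hε (fun _ => norm_nonneg _) hdiv
    (summable_step_mul_norm_gradient_sq hf hf0 hlip hLc hA1 hA2 hupd hε hα hstep)
    fun _ _ => norm_gradient_sub_le_sum hlip hLc hcu hA2 hupd hε

theorem gradient_eq_zero_of_tendsto_subseq (hf : Differentiable ℝ f) (hf0 : ∀ x, 0 ≤ f x)
    (hlip : ∀ x y, ‖gradient f x - gradient f y‖ ≤ Lc * ‖x - y‖) (hLc : 0 ≤ Lc) (hcu : 0 ≤ cu)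
    (hA1 : ∀ r, cl * ‖gradient f (θ r)‖ ^ 2 ≤ inner ℝ (gradient f (θ r)) (g r))
    (hA2 : ∀ r, ‖g r‖ ^ 2 ≤ cu * ‖gradient f (θ r)‖ ^ 2)
    (hupd : ∀ r, θ (r + 1) = θ r - ε r • g r) (hε : ∀ r, 0 ≤ ε r)
    (hα : 0 < α) (hstep : ∀ᶠ r in atTop, Lc * cu / 2 * ε r ≤ cl - α) (hdiv : ¬Summable ε)
    {φ : ℕ → ℕ} (hφ : StrictMono φ) {θlim : P} (hθ : Tendsto (θ ∘ φ) atTop (nhds θlim)) :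
    gradient f θlim = 0 := by
  have hcont : Continuous (gradient f) :=
    (LipschitzWith.of_dist_le' fun x y => by simpa only [dist_eq_norm] using hlip x y).continuous
  rw [← norm_eq_zero]
  exact tendsto_nhds_unique (((hcont.tendsto θlim).comp hθ).norm)
    ((tendsto_norm_gradient_zero hf hf0 hlip hLc hcu hA1 hA2 hupd hε hα hstep hdiv).comp
      hφ.tendsto_atTop)

end Iteration

theorem step_le_of_bounded_schedule {ε : ℕ → ℝ} {Lc cl cu ζ : ℝ} (hLc : 0 ≤ Lc) (hcu : 0 < cu)
    (hζ : 0 < ζ) (hε : ∀ r, ζ ≤ ε r ∧ ε r ≤ cl * (2 - ζ) / (Lc * cu)) (r : ℕ) :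
    Lc * cu / 2 * ε r ≤ cl - cl * ζ / 2 := by
  rcases hLc.eq_or_lt with rfl | hLc
  -- for `Lc = 0` the upper bound is `cl * (2 - ζ) / 0 = 0 < ζ`, so no schedule qualifies
  · have h0 := hε 0
    rw [zero_mul, div_zero] at h0
    linarith [h0.1, h0.2]
  have := (le_div_iff₀ (by positivity)).1 (hε r).2
  nlinarith

theorem eventually_step_le_of_tendsto_zero {ε : ℕ → ℝ} {Lc cl cu : ℝ} (hcl : 0 < cl)
    (hε : Tendsto ε atTop (nhds 0)) :
    ∀ᶠ r in atTop, Lc * cu / 2 * ε r ≤ cl - cl / 2 := by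
  have : Tendsto (fun r => Lc * cu / 2 * ε r) atTop (nhds 0) := by
    simpa using hε.const_mul (Lc * cu / 2)
  filter_upwards [this.eventually (ge_mem_nhds (half_pos hcl))] with r hr
  linarith

theorem not_summable_of_forall_le {ε : ℕ → ℝ} {ζ : ℝ} (hζ : 0 < ζ) (hε : ∀ r, ζ ≤ ε r) :
    ¬Summable ε := fun h =>
  let ⟨r, hr⟩ := (h.tendsto_atTop_zero.eventually (gt_mem_nhds hζ)).exists
  (hε r).not_gt hr

section FullRank

variable {ι P Q : Type*} [Fintype ι] [NormedAddCommGroup P] [NormedSpace ℝ P]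
  [NormedAddCommGroup Q] [InnerProductSpace ℝ Q] [CompleteSpace Q]

theorem LinearMap.surjective_of_rank_eq_finrank {K V W : Type*} [DivisionRing K] [AddCommGroup V]
    [Module K V] [AddCommGroup W] [Module K W] [FiniteDimensional K W] (f : V →ₗ[K] W)
    (h : f.rank = Module.finrank K W) : Function.Surjective f := by
  rw [← LinearMap.range_eq_top]
  refine Submodule.eq_top_of_finrank_eq ?_
  rw [Module.finrank, ← LinearMap.rank, h, Cardinal.toNat_natCast]

theorem gradient_eq_zero_of_fderiv_sum_eq_zero (ℓ : ι → Q → ℝ) (model : P → ι → Q) {θ : P}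
    (hℓ : ∀ i, DifferentiableAt ℝ (ℓ i) (model θ i))
    (hmodel : ∀ i, DifferentiableAt ℝ (fun θ => model θ i) θ)
    (hsurj : Function.Surjective (fderiv ℝ model θ))
    (hcrit : fderiv ℝ (fun θ => ∑ i, ℓ i (model θ i)) θ = 0) (i : ι) :
    gradient (ℓ i) (model θ i) = 0 := by
  set G := fun i => gradient (ℓ i) (model θ i)
  obtain ⟨v, hv⟩ := hsurj G
  have hDv : ∀ i, fderiv ℝ (fun θ => model θ i) θ v = G i := fun i => by
    rw [← hv, fderiv_pi hmodel]; rfl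
  have hsum : HasFDerivAt (fun θ => ∑ i, ℓ i (model θ i))
      (∑ i, (toDual ℝ Q (G i)).comp (fderiv ℝ (fun θ => model θ i) θ)) θ :=
    HasFDerivAt.fun_sum fun i _ =>
      (hℓ i).hasGradientAt.hasFDerivAt.comp θ (hmodel i).hasFDerivAt
  have hzero : ∑ j, ‖G j‖ ^ 2 = 0 := by
    have := congrArg (· v) (hsum.fderiv.symm.trans hcrit)
    simpa [hDv, real_inner_self_eq_norm_sq] using this
  have := (Finset.sum_eq_zero_iff_of_nonneg fun j _ => sq_nonneg ‖G j‖).1 hzero i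
    (Finset.mem_univ i)
  simpa using this

end FullRank

theorem limit_point_is_global_min_general
    {Du N Dθ : ℕ}
    (U : Set (EuclideanSpace ℝ (Fin Du)))
    (ℓ : EuclideanSpace ℝ (Fin Du) → EuclideanSpace ℝ (Fin Du) → ℝ)
    (u : Fin N → EuclideanSpace ℝ (Fin Du)) (hu : ∀ i, u i ∈ U)
    (model : EuclideanSpace ℝ (Fin Dθ) → Fin N → EuclideanSpace ℝ (Fin Du))
    (hmodel : ∀ i, Differentiable ℝ fun θ => model θ i)
    (hosc : ∀ v ∈ U, ∀ q : EuclideanSpace ℝ (Fin Du),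
      DifferentiableAt ℝ (fun p => ℓ p v) q ∧
        (gradient (fun p => ℓ p v) q = 0 → ∀ q', ℓ q v ≤ ℓ q' v))
    (L : EuclideanSpace ℝ (Fin Dθ) → ℝ)
    (hL : L = fun θ => (1 / (N : ℝ)) * ∑ i, ℓ (model θ i) (u i))
    (hLnonneg : ∀ θ, 0 ≤ L θ)
    (Lc : ℝ) (hLc : 0 ≤ Lc)
    (hlip : ∀ θ θ', ‖gradient L θ - gradient L θ'‖ ≤ Lc * ‖θ - θ'‖)
    (θseq gseq : ℕ → EuclideanSpace ℝ (Fin Dθ)) (ε : ℕ → ℝ)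
    (cl cu : ℝ) (hcl : 0 < cl) (hcu : 0 < cu)
    (hA1 : ∀ r, cl * ‖gradient L (θseq r)‖ ^ 2 ≤ (inner ℝ (gradient L (θseq r)) (gseq r) : ℝ))
    (hA2 : ∀ r, ‖gseq r‖ ^ 2 ≤ cu * ‖gradient L (θseq r)‖ ^ 2)
    (hupd : ∀ r, θseq (r + 1) = θseq r - ε r • gseq r)
    (hεpos : ∀ r, 0 ≤ ε r)
    (hrate :
      (∃ ζ : ℝ, 0 < ζ ∧ ∀ r, ζ ≤ ε r ∧ ε r ≤ cl * (2 - ζ) / (Lc * cu)) ∨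
      (Tendsto ε atTop (nhds 0) ∧
        Tendsto (fun n => ∑ r ∈ Finset.range n, ε r) atTop atTop))
    (θlim : EuclideanSpace ℝ (Fin Dθ))
    (hlimpt : ∃ φ : ℕ → ℕ, StrictMono φ ∧
      Tendsto (fun k => θseq (φ k)) atTop (nhds θlim))
    (hrank : LinearMap.rank
        (fderiv ℝ (fun θ' => (fun i => model θ' i)) θlim).toLinearMap
        = ((N * Du : ℕ) : Cardinal)) :
    ∀ θ', L θlim ≤ L θ' := by
  obtain ⟨φ, hφ, hθ⟩ := hlimpt
  have hℓ : ∀ i, Differentiable ℝ fun p => ℓ p (u i) := fun i q => (hosc _ (hu i) q).1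
  have hsum : Differentiable ℝ fun θ => ∑ i, ℓ (model θ i) (u i) :=
    Differentiable.fun_sum fun i _ => (hℓ i).comp (hmodel i)
  obtain ⟨α, hα, hstep, hdiv⟩ : ∃ α, 0 < α ∧ (∀ᶠ r in atTop, Lc * cu / 2 * ε r ≤ cl - α) ∧
      ¬Summable ε := by
    rcases hrate with ⟨ζ, hζ, hsched⟩ | ⟨hε0, hdiv⟩
    · exact ⟨cl * ζ / 2, by positivity,
        Eventually.of_forall (step_le_of_bounded_schedule hLc hcu hζ hsched),
        not_summable_of_forall_le hζ fun r => (hsched r).1⟩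
    · exact ⟨cl / 2, half_pos hcl, eventually_step_le_of_tendsto_zero hcl hε0,
        (not_summable_iff_tendsto_nat_atTop_of_nonneg hεpos).2 hdiv⟩
  have hLdiff : Differentiable ℝ L := hL ▸ hsum.const_mul _
  have hcrit : gradient L θlim = 0 := gradient_eq_zero_of_tendsto_subseq hLdiff hLnonneg hlip
    hLc hcu.le hA1 hA2 hupd hεpos hα hstep hdiv hφ hθ
  have hsurj : Function.Surjective (fderiv ℝ (fun θ' i => model θ' i) θlim) :=
    LinearMap.surjective_of_rank_eq_finrank _ <| hrank.trans <| by
      rw [Module.finrank_pi_fintype]; simp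
  have hfderiv : fderiv ℝ L θlim = 0 := by rw [← toDual_gradient, hcrit, map_zero]
  rw [hL, fderiv_const_mul (hsum θlim)] at hfderiv
  intro θ'
  rw [hL]
  dsimp only
  gcongr with i
  have hNinv : (1 / N : ℝ) ≠ 0 := by simp [(Fin.pos i).ne']
  exact (hosc _ (hu i) _).2 (gradient_eq_zero_of_fderiv_sum_eq_zero (fun i p => ℓ p (u i)) model
    (fun i => hℓ i _) (fun i => hmodel i _) hsurj ((smul_eq_zero.1 hfderiv).resolve_left hNinv) i) _

/-- Combining Theorems 1 and 2: under Assumption A, Lipschitz gradient of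
`L`, the optimal stationarity condition of `ℓ`, and either learning-rate schedule (i)
`ζ ≤ εᵣ ≤ c̲(2−ζ)/(Lc·c̄)` or (ii) `εᵣ → 0` with `Σ εᵣ = ∞`, any limit point `θlim` of the
iterate sequence at which the Jacobian of the stacked output map has full row rank `N·Du`
is a global minimum of `L`. -/
theorem limit_point_is_global_min
    {Du N Dθ : ℕ} (hN : 0 < N)
    (U : Set (EuclideanSpace ℝ (Fin Du)))
    (ℓ : EuclideanSpace ℝ (Fin Du) → EuclideanSpace ℝ (Fin Du) → ℝ)
    (u : Fin N → EuclideanSpace ℝ (Fin Du)) (hu : ∀ i, u i ∈ U)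
    (model : EuclideanSpace ℝ (Fin Dθ) → Fin N → EuclideanSpace ℝ (Fin Du))
    (hmodel : ∀ i, Differentiable ℝ fun θ => model θ i)
    (hosc : ∀ v ∈ U, ∀ q : EuclideanSpace ℝ (Fin Du),
      DifferentiableAt ℝ (fun p => ℓ p v) q ∧
        (gradient (fun p => ℓ p v) q = 0 → ∀ q', ℓ q v ≤ ℓ q' v))
    (L : EuclideanSpace ℝ (Fin Dθ) → ℝ)
    (hL : L = fun θ => (1 / (N : ℝ)) * ∑ i, ℓ (model θ i) (u i))
    (hLdiff : Differentiable ℝ L) (hLnonneg : ∀ θ, 0 ≤ L θ)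
    (Lc : ℝ) (hLc : 0 ≤ Lc)
    (hlip : ∀ θ θ', ‖gradient L θ - gradient L θ'‖ ≤ Lc * ‖θ - θ'‖)
    (θseq gseq : ℕ → EuclideanSpace ℝ (Fin Dθ)) (ε : ℕ → ℝ)
    (cl cu : ℝ) (hcl : 0 < cl) (hcu : 0 < cu)
    (hA1 : ∀ r, cl * ‖gradient L (θseq r)‖ ^ 2 ≤ (inner ℝ (gradient L (θseq r)) (gseq r) : ℝ))
    (hA2 : ∀ r, ‖gseq r‖ ^ 2 ≤ cu * ‖gradient L (θseq r)‖ ^ 2)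
    (hupd : ∀ r, θseq (r + 1) = θseq r - ε r • gseq r)
    (hεpos : ∀ r, 0 ≤ ε r)
    (hrate :
      (∃ ζ : ℝ, 0 < ζ ∧ ∀ r, ζ ≤ ε r ∧ ε r ≤ cl * (2 - ζ) / (Lc * cu)) ∨
      (Tendsto ε atTop (nhds 0) ∧
        Tendsto (fun n => ∑ r ∈ Finset.range n, ε r) atTop atTop))
    (θlim : EuclideanSpace ℝ (Fin Dθ))
    (hlimpt : ∃ φ : ℕ → ℕ, StrictMono φ ∧
      Tendsto (fun k => θseq (φ k)) atTop (nhds θlim))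
    (hrank : LinearMap.rank
        (fderiv ℝ (fun θ' => (fun i => model θ' i)) θlim).toLinearMap
        = ((N * Du : ℕ) : Cardinal)) :
    ∀ θ', L θlim ≤ L θ' :=
  limit_point_is_global_min_general U ℓ u hu model hmodel hosc L hL hLnonneg Lc hLc hlip θseq gseq ε
    cl cu hcl hcu hA1 hA2 hupd hεpos hrate θlim hlimpt hrank
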